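/- arXiv:2602.09424 — 3 statements merged into one kernel-verified Lean document; each statement's English description precedes it below -/
import Mathlib

section
/- Let X be a nonempty finite type, let p0 be a probability distribution on X with p0(x) > 0 for all x, and let F be a Markov kernel on X such that for every xt the marginal m(xt) = Σ_y p0(y) · F(y, xt) is positive. Define the posterior kernel B(xt, x0) = p0(x0) · F(x0, xt) / m(xt) and the forward–backward kernel K(x0, x0') = Σ_{xt} F(x0, xt) · B(xt, x0'). Then K is a Markov kernel on X and K is reversible with respect to p0: for all x0, x0', p0(x0) · K(x0, x0') = p0(x0') · K(x0', x0). -/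
open Finset

/-- The forward–backward kernel `K(x0, x0') = Σ_{xt} F(x0, xt)·B(xt, x0')`, where `B`
is the posterior kernel of the forward kernel `F` under `p0`, is a Markov kernel and
is reversible with respect to `p0`. -/
theorem forward_backward_kernel_reversible {X : Type*} [Fintype X] [Nonempty X]
    (p0 : X → ℝ) (hp0_pos : ∀ x, 0 < p0 x) (hp0_sum : ∑ x, p0 x = 1)
    (F : X → X → ℝ) (hF_nonneg : ∀ x x', 0 ≤ F x x') (hF_sum : ∀ x, ∑ x', F x x' = 1)
    (m : X → ℝ) (hm : ∀ xt, m xt = ∑ y, p0 y * F y xt) (hm_pos : ∀ xt, 0 < m xt)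
    (B : X → X → ℝ) (hB : ∀ xt x0, B xt x0 = p0 x0 * F x0 xt / m xt)
    (K : X → X → ℝ) (hK : ∀ x0 x0', K x0 x0' = ∑ xt, F x0 xt * B xt x0') :
    ((∀ x x', 0 ≤ K x x') ∧ (∀ x, ∑ x', K x x' = 1)) ∧
      (∀ x x', p0 x * K x x' = p0 x' * K x' x) := by
  have hB_nonneg : ∀ xt x0, 0 ≤ B xt x0 := by
    intro xt x0
    rw [hB]
    exact div_nonneg (mul_nonneg (hp0_pos x0).le (hF_nonneg _ _)) (hm_pos xt).le
  have hB_sum : ∀ xt, ∑ x0, B xt x0 = 1 := by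
    intro xt
    have : ∑ x0, B xt x0 = (∑ x0, p0 x0 * F x0 xt) / m xt := by
      rw [Finset.sum_div]
      exact Finset.sum_congr rfl fun x0 _ => hB xt x0
    rw [this, ← hm, div_self (hm_pos xt).ne']
  refine ⟨⟨fun x x' => ?_, fun x => ?_⟩, fun x x' => ?_⟩
  · rw [hK]
    exact Finset.sum_nonneg fun xt _ => mul_nonneg (hF_nonneg _ _) (hB_nonneg _ _)
  · calc ∑ x', K x x' = ∑ x', ∑ xt, F x xt * B xt x' := by
          exact Finset.sum_congr rfl fun x' _ => hK x x'
      _ = ∑ xt, ∑ x', F x xt * B xt x' := Finset.sum_comm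
      _ = ∑ xt, F x xt * ∑ x', B xt x' := by
          simp [Finset.mul_sum]
      _ = 1 := by simp [hB_sum, hF_sum]
  · rw [hK, hK, Finset.mul_sum, Finset.mul_sum]
    refine Finset.sum_congr rfl fun xt _ => ?_
    rw [hB, hB]
    field_simp
end

section
/- Let X be a nonempty finite type, let p0 be a probability distribution on X with p0(x) > 0 for all x, let r : X → ℝ be a reward function, let β > 0, and define the reward-weighted target p_β(x) = exp(r(x)/β) · p0(x) / Z with Z = Σ_y exp(r(y)/β) · p0(y). Let F be a Markov kernel on X, fix xt ∈ X with m(xt) = Σ_y p0(y) · F(y, xt) > 0, and define the posterior kernel B(xt, x0) = p0(x0) · F(x0, xt) / m(xt). Then for all x0, x0' with F(x0, xt) > 0 and F(x0', xt) > 0, the Metropolis–Hastings ratio with the fixed-xt forward–backward proposal q(x, y) = F(x, xt) · B(xt, y) simplifies to (p_β(x0') · q(x0', x0)) / (p_β(x0) · q(x0, x0')) = exp((r(x0') − r(x0)) / β). -/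
open Finset

/-- For the reward-weighted target `p_β(x) = exp(r(x)/β)·p0(x)/Z` and the fixed-`xt`
forward–backward proposal `q(x,y) = F(x,xt)·B(xt,y)` (with `B` the posterior kernel of
`F` under `p0`), the Metropolis–Hastings ratio simplifies to
`exp((r(x0') − r(x0))/β)`. -/
theorem mh_ratio_simplifies {X : Type*} [Fintype X] [Nonempty X]
    (p0 : X → ℝ) (hp0_pos : ∀ x, 0 < p0 x) (hp0_sum : ∑ x, p0 x = 1)
    (r : X → ℝ) (β : ℝ) (hβ : 0 < β)
    (Z : ℝ) (hZ : Z = ∑ y, Real.exp (r y / β) * p0 y)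
    (pβ : X → ℝ) (hpβ : ∀ x, pβ x = Real.exp (r x / β) * p0 x / Z)
    (F : X → X → ℝ) (hF_nonneg : ∀ x x', 0 ≤ F x x') (hF_sum : ∀ x, ∑ x', F x x' = 1)
    (xt : X) (m : ℝ) (hm : m = ∑ y, p0 y * F y xt) (hm_pos : 0 < m)
    (B : X → ℝ) (hB : ∀ x0, B x0 = p0 x0 * F x0 xt / m)
    (q : X → X → ℝ) (hq : ∀ a b, q a b = F a xt * B b) :
    ∀ x0 x0', 0 < F x0 xt → 0 < F x0' xt →
      (pβ x0' * q x0' x0) / (pβ x0 * q x0 x0')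
        = Real.exp ((r x0' - r x0) / β) := by
  intro x0 x0' h0 h0'
  have hZpos : 0 < Z := by
    rw [hZ]
    exact Finset.sum_pos (fun y _ => mul_pos (Real.exp_pos _) (hp0_pos y)) Finset.univ_nonempty
  rw [hpβ, hpβ, hq, hq, hB, hB]
  rw [sub_div, Real.exp_sub]
  have h1 : p0 x0 ≠ 0 := (hp0_pos x0).ne'
  have h2 : p0 x0' ≠ 0 := (hp0_pos x0').ne'
  have h3 : m ≠ 0 := hm_pos.ne'
  have h4 : Z ≠ 0 := hZpos.ne'
  have h5 : Real.exp (r x0 / β) ≠ 0 := (Real.exp_pos _).ne'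
  field_simp
end

section
/- Let X be a nonempty finite type, let p^pre be a probability distribution on X with p^pre(x) > 0 for all x, let r : X → ℝ, and let β > 0. Define p_β(x) = exp(r(x)/β) · p^pre(x) / Z with Z = Σ_y exp(r(y)/β) · p^pre(y), and for a probability distribution p on X define the objective J(p) = Σ_x p(x) · r(x) − β · D_KL(p ‖ p^pre), where D_KL(p ‖ p^pre) = Σ_x p(x) · log(p(x) / p^pre(x)) (with the convention 0 · log 0 = 0). Then p_β is a probability distribution on X and for every probability distribution p on X, J(p) ≤ J(p_β); moreover J(p_β) = β · log Z. -/
/-!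
Gibbs variational principle. For weights `q > 0` and a potential `f`, let `Z = Σ_x e^{f x} q x`
and let `q_f = e^f q / Z` be the exponentially tilted distribution. Since
`log (q_f / q) = f - log Z`, for every probability distribution `p`
`Σ p f - D(p ‖ q) = log Z - D(p ‖ q_f)`,
and `D(p ‖ q_f) ≥ 0` by `log t ≤ t - 1` (Gibbs' inequality), with equality at `p = q_f`.
The objective is `J(p) = β (Σ p (r/β) - D(p ‖ p^pre))`, so this is the case `f = r/β`.
-/

open Finset Real

lemma sub_le_mul_log_div {a b : ℝ} (ha : 0 ≤ a) (hb : 0 < b) : a - b ≤ a * log (a / b) := by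
  have h := self_sub_one_le_mul_log (div_nonneg ha hb.le)
  calc a - b = b * (a / b - 1) := by field_simp
    _ ≤ b * (a / b * log (a / b)) := mul_le_mul_of_nonneg_left h hb.le
    _ = a * log (a / b) := by field_simp

lemma sum_sub_sum_le_sum_mul_log_div {ι : Type*} (s : Finset ι) {p q : ι → ℝ}
    (hp : ∀ x ∈ s, 0 ≤ p x) (hq : ∀ x ∈ s, 0 < q x) :
    ∑ x ∈ s, p x - ∑ x ∈ s, q x ≤ ∑ x ∈ s, p x * log (p x / q x) := by
  rw [← sum_sub_distrib]
  exact sum_le_sum fun x hx => sub_le_mul_log_div (hp x hx) (hq x hx)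

lemma mul_log_div_eq_mul_log_div_add (a : ℝ) {b c : ℝ} (hb : 0 < b) (hc : 0 < c) :
    a * log (a / c) = a * log (a / b) + a * log (b / c) := by
  rcases eq_or_ne a 0 with rfl | ha
  · simp
  rw [← mul_add, ← log_mul (by positivity) (by positivity)]
  congr 2
  field_simp

section ExpTilt

variable {ι : Type*} [Fintype ι] {q : ι → ℝ}

noncomputable def expTilt (q f : ι → ℝ) (x : ι) : ℝ :=
  exp (f x) * q x / ∑ y, exp (f y) * q y

variable [Nonempty ι] (f : ι → ℝ)

lemma sum_exp_mul_pos (hq : ∀ x, 0 < q x) : 0 < ∑ y, exp (f y) * q y :=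
  sum_pos (fun y _ => mul_pos (exp_pos _) (hq y)) univ_nonempty

lemma expTilt_pos (hq : ∀ x, 0 < q x) (x : ι) : 0 < expTilt q f x :=
  div_pos (mul_pos (exp_pos _) (hq x)) (sum_exp_mul_pos f hq)

lemma sum_expTilt (hq : ∀ x, 0 < q x) : ∑ x, expTilt q f x = 1 := by
  simp only [expTilt]
  rw [← sum_div, div_self (sum_exp_mul_pos f hq).ne']

lemma log_expTilt_div (hq : ∀ x, 0 < q x) (x : ι) :
    log (expTilt q f x / q x) = f x - log (∑ y, exp (f y) * q y) := by
  have hZ := sum_exp_mul_pos f hq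
  have hratio : expTilt q f x / q x = exp (f x) / ∑ y, exp (f y) * q y := by
    rw [expTilt]
    field_simp [(hq x).ne']
  rw [hratio, log_div (exp_pos _).ne' hZ.ne', log_exp]

lemma sum_mul_sub_sum_mul_log_div_eq (hq : ∀ x, 0 < q x) {p : ι → ℝ} (hp : ∑ x, p x = 1) :
    ∑ x, p x * f x - ∑ x, p x * log (p x / q x) =
      log (∑ y, exp (f y) * q y) - ∑ x, p x * log (p x / expTilt q f x) := by
  have hsplit x := mul_log_div_eq_mul_log_div_add (p x) (expTilt_pos f hq x) (hq x)
  simp only [hsplit, log_expTilt_div f hq, sum_add_distrib, mul_sub, sum_sub_distrib, ← sum_mul,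
    hp]
  ring

lemma sum_mul_sub_sum_mul_log_div_le (hq : ∀ x, 0 < q x) {p : ι → ℝ} (hp₀ : ∀ x, 0 ≤ p x)
    (hp : ∑ x, p x = 1) :
    ∑ x, p x * f x - ∑ x, p x * log (p x / q x) ≤ log (∑ y, exp (f y) * q y) := by
  have hgibbs := sum_sub_sum_le_sum_mul_log_div univ (fun x _ => hp₀ x)
    (fun x _ => expTilt_pos f hq x)
  rw [hp, sum_expTilt f hq, sub_self] at hgibbs
  rw [sum_mul_sub_sum_mul_log_div_eq f hq hp]
  linarith

lemma sum_expTilt_mul_sub_sum_mul_log_div (hq : ∀ x, 0 < q x) :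
    ∑ x, expTilt q f x * f x - ∑ x, expTilt q f x * log (expTilt q f x / q x) =
      log (∑ y, exp (f y) * q y) := by
  simp [sum_mul_sub_sum_mul_log_div_eq f hq (sum_expTilt f hq)]

end ExpTilt

theorem reward_weighted_maximizes_objective_general {X : Type*} [Fintype X] [Nonempty X]
    (ppre : X → ℝ) (hpre_pos : ∀ x, 0 < ppre x)
    (r : X → ℝ) (β : ℝ) (hβ : 0 < β)
    (Z : ℝ) (hZ : Z = ∑ y, Real.exp (r y / β) * ppre y)
    (pβ : X → ℝ) (hpβ : ∀ x, pβ x = Real.exp (r x / β) * ppre x / Z)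
    (J : (X → ℝ) → ℝ)
    (hJ : ∀ p, J p = (∑ x, p x * r x) - β * ∑ x, p x * Real.log (p x / ppre x)) :
    ((∀ x, 0 ≤ pβ x) ∧ ∑ x, pβ x = 1) ∧
    (∀ p : X → ℝ, (∀ x, 0 ≤ p x) → (∑ x, p x = 1) → J p ≤ J pβ) ∧
    J pβ = β * Real.log Z := by
  set f : X → ℝ := fun x => r x / β
  have hpβ_eq : pβ = expTilt ppre f := funext fun x => by rw [hpβ, hZ]; rfl
  have hJ_eq p : J p = β * (∑ x, p x * f x - ∑ x, p x * log (p x / ppre x)) := by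
    have hreward : ∑ x, p x * r x = β * ∑ x, p x * f x := by
      rw [mul_sum]
      exact sum_congr rfl fun x _ => by simp only [f]; field_simp
    rw [hJ, hreward, mul_sub]
  have hJpβ : J pβ = β * log Z := by
    rw [hJ_eq, hpβ_eq, sum_expTilt_mul_sub_sum_mul_log_div f hpre_pos, hZ]
  refine ⟨⟨fun x => hpβ_eq ▸ (expTilt_pos f hpre_pos x).le,
    hpβ_eq ▸ sum_expTilt f hpre_pos⟩, fun p hp₀ hp => ?_, hJpβ⟩
  rw [hJpβ, hJ_eq, hZ]
  exact mul_le_mul_of_nonneg_left (sum_mul_sub_sum_mul_log_div_le f hpre_pos hp₀ hp) hβ.le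

/-- The reward-weighted distribution `p_β(x) = exp(r(x)/β)·p^pre(x)/Z` is a probability
distribution, and it maximizes the KL-regularized reward objective
`J(p) = Σ_x p(x)·r(x) − β·D_KL(p ‖ p^pre)` over all probability distributions `p`;
moreover the optimal value is `J(p_β) = β·log Z`.
(Since `Real.log 0 = 0` in Mathlib, the summand `p x * Real.log (p x / ppre x)` obeys
the convention `0·log 0 = 0`.) -/
theorem reward_weighted_maximizes_objective {X : Type*} [Fintype X] [Nonempty X]
    (ppre : X → ℝ) (hpre_pos : ∀ x, 0 < ppre x) (hpre_sum : ∑ x, ppre x = 1)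
    (r : X → ℝ) (β : ℝ) (hβ : 0 < β)
    (Z : ℝ) (hZ : Z = ∑ y, Real.exp (r y / β) * ppre y)
    (pβ : X → ℝ) (hpβ : ∀ x, pβ x = Real.exp (r x / β) * ppre x / Z)
    (J : (X → ℝ) → ℝ)
    (hJ : ∀ p, J p = (∑ x, p x * r x) - β * ∑ x, p x * Real.log (p x / ppre x)) :
    ((∀ x, 0 ≤ pβ x) ∧ ∑ x, pβ x = 1) ∧
    (∀ p : X → ℝ, (∀ x, 0 ≤ p x) → (∑ x, p x = 1) → J p ≤ J pβ) ∧
    J pβ = β * Real.log Z :=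
  reward_weighted_maximizes_objective_general ppre hpre_pos r β hβ Z hZ pβ hpβ J hJ
end
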